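/- arXiv:2010.01130 — 3 statements merged into one kernel-verified Lean document; each statement's English description precedes it below -/
import Mathlib

section
/- Let k be a field of characteristic 2 and K a finitely generated field extension of k of transcendence degree 1 in which k is algebraically closed, with [K : k(K²)] = 2. Let f ∈ K \ k(K²) and let α, β, γ, δ ∈ k(K⁴) with αδ + βγ ≠ 0. If (αf + β)/(γf + δ) = f, then β = 0, γ = 0 and α = δ. (The fractional-linear action of Γ = PGL₂(k^{1/4}·K) on K \ k(K²) is free.) -/
open IntermediateField

/-- The subfield `k(K²)` of `K` generated by (the image of) `k` and all squares. -/
def kSq (k K : Type*) [Field k] [Field K] [Algebra k K] : IntermediateField k K :=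
  IntermediateField.adjoin k {x : K | ∃ y : K, x = y ^ 2}

/-- The subfield `k(K⁴)` of `K` generated by (the image of) `k` and all fourth
powers. -/
def kFour (k K : Type*) [Field k] [Field K] [Algebra k K] : IntermediateField k K :=
  IntermediateField.adjoin k {x : K | ∃ y : K, x = y ^ 4}

/-!
In characteristic `2` the fixed-point equation reads `γf² + (α + δ)f + β = 0`, and since
`f ∉ k(K²)` it forces `α = δ` and `γf² = β`. If `γ ≠ 0`, then `f² = β/γ ∈ k(K⁴)`; as
`K = k(K²)(f)`, squaring gives `k(K²) = k(K⁴)`, so `[K : k(K⁴)] = 2`. This contradicts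
`[K : k(K⁴)] ≥ 4`, a degree count in the tower `k(t⁴) ⊆ k(K⁴) ⊆ K` for a transcendental `t`
with `K / k(t)` finite: `[K : k(t⁴)] = 4 [K : k(t)]`, while `k(K⁴)` is spanned over `k(t⁴)` by
the fourth powers of a basis of `K / k(t)`.
-/

theorem eq_and_mul_sq_eq_of_div_eq_self {K : Type*} [Field K] [CharP K 2] {F : Subfield K}
    {f α β γ δ : K}
    (hf : f ∉ F) (hf2 : f ^ 2 ∈ F) (hα : α ∈ F) (hβ : β ∈ F) (hγ : γ ∈ F) (hδ : δ ∈ F)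
    (hfix : (α * f + β) / (γ * f + δ) = f) : α = δ ∧ γ * f ^ 2 = β := by
  have h2 : (2 : K) = 0 := CharTwo.two_eq_zero
  have hden : γ * f + δ ≠ 0 := fun h => hf (by rw [← hfix, h, div_zero]; exact F.zero_mem)
  rw [div_eq_iff hden] at hfix
  have hquad : γ * f ^ 2 + (α + δ) * f + β = 0 := by
    linear_combination hfix + (γ * f ^ 2 + δ * f) * h2
  have hsum : α + δ = 0 := by
    by_contra hne
    have hf_eq : f = (γ * f ^ 2 + β) / (α + δ) := by
      rw [eq_div_iff hne]
      linear_combination hquad - (γ * f ^ 2 + β) * h2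
    exact hf (hf_eq ▸ div_mem (add_mem (mul_mem hγ hf2) hβ) (add_mem hα hδ))
  exact ⟨by linear_combination hsum - δ * h2,
    by linear_combination hquad - f * hsum - β * h2⟩

section

variable {k K : Type*} [Field k] [Field K] [Algebra k K]

theorem apply_mem_of_mem_adjoin {F : Type*} [Field F] [Algebra F K] (φ : K →+* K)
    {S : Set K} {L : Subfield K} (hF : ∀ a : F, φ (algebraMap F K a) ∈ L)
    (hS : ∀ s ∈ S, φ s ∈ L) {x : K} (hx : x ∈ adjoin F S) : φ x ∈ L := by
  rw [← mem_toSubfield, adjoin_toSubfield] at hx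
  exact (Subfield.closure_le (t := L.comap φ)).2
    (Set.union_subset (by rintro _ ⟨a, rfl⟩; exact hF a) hS) hx

theorem relfinrank_adjoin_range_le (φ : K →+* K) {E F : IntermediateField k K}
    [FiniteDimensional E K] (hEF : ∀ x ∈ E, φ x ∈ F) (hF : F ≤ adjoin k (Set.range φ)) :
    F.relfinrank (adjoin k (Set.range φ)) ≤ Module.finrank E K := by
  set b := Module.finBasis E K
  have hspan : Subalgebra.toSubmodule (Algebra.adjoin F (Set.range φ)) ≤
      Submodule.span F (Set.range fun i => φ (b i)) := by
    rw [Algebra.adjoin_eq_span, ← RingHom.coe_rangeS, ← Subsemiring.coe_toSubmonoid,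
      Submonoid.closure_eq, Submodule.span_le]
    rintro _ ⟨y, rfl⟩
    rw [← b.sum_repr y, map_sum]
    refine Submodule.sum_mem _ fun i _ => ?_
    rw [Algebra.smul_def, map_mul]
    exact Submodule.smul_of_tower_mem _ (⟨φ (b.repr y i), hEF _ (b.repr y i).2⟩ : F)
      (Submodule.subset_span ⟨i, rfl⟩)
  have : FiniteDimensional F (Submodule.span F (Set.range fun i => φ (b i))) :=
    FiniteDimensional.span_of_finite F (Set.finite_range _)
  have : FiniteDimensional F (Algebra.adjoin F (Set.range φ)) :=
    Submodule.finiteDimensional_of_le hspan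
  have hfield : (adjoin F (Set.range φ)).toSubalgebra = Algebra.adjoin F (Set.range φ) :=
    adjoin_toSubalgebra_of_isAlgebraic fun x hx =>
      (IsIntegral.of_finite F (⟨x, Algebra.subset_adjoin hx⟩ : Algebra.adjoin F (Set.range φ))
        |>.map (Algebra.adjoin F (Set.range φ)).val).isAlgebraic
  calc F.relfinrank (adjoin k (Set.range φ))
      = Module.finrank F (Algebra.adjoin F (Set.range φ)) := by
        rw [relfinrank_eq_finrank_of_le hF, extendScalars_adjoin, ← hfield]; rfl
    _ ≤ Module.finrank F (Submodule.span F (Set.range fun i => φ (b i))) :=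
        Submodule.finrank_mono hspan
    _ ≤ Module.finrank E K := (finrank_range_le_card _).trans (by simp)

theorem finiteDimensional_of_fg_top (hfg : (⊤ : IntermediateField k K).FG)
    (E : IntermediateField k K) [Algebra.IsAlgebraic E K] : FiniteDimensional E K :=
  have := fg_top_iff.1 hfg
  have : Algebra.EssFiniteType E K := .of_comp k _ _
  Algebra.finite_of_essFiniteType_of_isAlgebraic

theorem RatFunc.finrank_adjoin_X_pow (n : ℕ) :
    Module.finrank (adjoin k {(RatFunc.X : RatFunc k) ^ n}) (RatFunc k) = n := by
  rw [RatFunc.finrank_eq_max_natDegree, ← RatFunc.algebraMap_X, ← map_pow,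
    RatFunc.num_algebraMap, RatFunc.denom_algebraMap]
  simp

theorem Transcendental.relfinrank_adjoin_pow {t : K} (ht : Transcendental k t) (n : ℕ) :
    relfinrank (adjoin k {t ^ n}) (adjoin k {t}) = n := by
  let φ : RatFunc k →ₐ[k] K :=
    (adjoin k {t}).val.comp (RatFunc.algEquivOfTranscendental t ht).toAlgHom
  have hX : φ RatFunc.X = t := by simp [φ]
  have := relfinrank_map_map (adjoin k {RatFunc.X ^ n}) (adjoin k {RatFunc.X}) φ
  rwa [adjoin_map, adjoin_map, Set.image_singleton, Set.image_singleton, map_pow, hX,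
    RatFunc.adjoin_X, relfinrank_top_right, RatFunc.finrank_adjoin_X_pow] at this

theorem pow_le_finrank_adjoin_range_iterateFrobenius (p : ℕ) [ExpChar K p] {t : K}
    (ht : Transcendental k t) [FiniteDimensional (adjoin k {t}) K] (n : ℕ) :
    p ^ n ≤ Module.finrank (adjoin k (Set.range (iterateFrobenius K p n))) K := by
  set φ := iterateFrobenius K p n
  have hφ (x : K) : φ x = x ^ p ^ n := iterateFrobenius_def ..
  have hFE : adjoin k {t ^ p ^ n} ≤ adjoin k {t} :=
    adjoin_simple_le_iff.2 (pow_mem (mem_adjoin_simple_self k t) _)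
  have hFL : adjoin k {t ^ p ^ n} ≤ adjoin k (Set.range φ) :=
    adjoin_simple_le_iff.2 (subset_adjoin _ _ ⟨t, hφ t⟩)
  have hEF : ∀ x ∈ adjoin k {t}, φ x ∈ adjoin k {t ^ p ^ n} := fun x hx =>
    apply_mem_of_mem_adjoin φ (L := (adjoin k {t ^ p ^ n}).toSubfield)
      (fun a => by rw [hφ, ← map_pow]; exact algebraMap_mem _ _)
      (by rintro s rfl; rw [hφ]; exact mem_adjoin_simple_self k _) hx
  have hE := relfinrank_mul_finrank_top hFE
  have hL := relfinrank_mul_finrank_top hFL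
  rw [ht.relfinrank_adjoin_pow] at hE
  have hle := relfinrank_adjoin_range_le φ hEF hFL
  have hpos : 0 < Module.finrank (adjoin k {t}) K := Module.finrank_pos
  nlinarith

theorem sq_mem_kSq (x : K) : x ^ 2 ∈ kSq k K :=
  subset_adjoin k _ ⟨x, rfl⟩

theorem kFour_le_kSq : kFour k K ≤ kSq k K :=
  adjoin_le_iff.2 fun _ ⟨y, hy⟩ => hy ▸ (by ring : (y ^ 2) ^ 2 = y ^ 4) ▸ sq_mem_kSq (y ^ 2)

variable [CharP K 2]

theorem sq_mem_kFour_of_mem_kSq {x : K} (hx : x ∈ kSq k K) : x ^ 2 ∈ kFour k K := by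
  rw [← frobenius_def 2 x]
  refine apply_mem_of_mem_adjoin (frobenius K 2) (L := (kFour k K).toSubfield)
    (fun a => ?_) ?_ hx
  · rw [frobenius_def, ← map_pow]
    exact algebraMap_mem _ _
  · rintro _ ⟨y, rfl⟩
    rw [frobenius_def, ← pow_mul]
    exact subset_adjoin k _ ⟨y, rfl⟩

theorem kSq_eq_kFour_of_sq_mem (hdeg : Module.finrank (kSq k K) K = 2) {f : K}
    (hf : f ∉ kSq k K) (hf4 : f ^ 2 ∈ kFour k K) : kSq k K = kFour k K := by
  have htop : (kSq k K)⟮f⟯ = ⊤ := by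
    have := isSimpleOrder_of_finrank_prime (kSq k K) K (hdeg ▸ Nat.prime_two)
    refine (eq_bot_or_eq_top _).resolve_left fun hbot => hf ?_
    obtain ⟨a, ha⟩ := adjoin_simple_eq_bot_iff.1 hbot
    exact ha ▸ a.2
  refine le_antisymm (adjoin_le_iff.2 ?_) kFour_le_kSq
  rintro _ ⟨y, rfl⟩
  rw [SetLike.mem_coe, ← frobenius_def 2 y]
  exact apply_mem_of_mem_adjoin (frobenius K 2) (L := (kFour k K).toSubfield)
    (fun a => sq_mem_kFour_of_mem_kSq a.2) (by rintro _ rfl; exact hf4)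
    (htop ▸ mem_top : y ∈ (kSq k K)⟮f⟯)

theorem four_le_finrank_kFour {t : K} (ht : Transcendental k t)
    [FiniteDimensional (adjoin k {t}) K] : 4 ≤ Module.finrank (kFour k K) K := by
  have : kFour k K = adjoin k (Set.range (iterateFrobenius K 2 2)) := by
    refine congrArg (adjoin k) (Set.ext fun x => exists_congr fun y => ?_)
    rw [iterateFrobenius_def, eq_comm]
    norm_num
  rw [this]
  exact pow_le_finrank_adjoin_range_iterateFrobenius 2 ht 2

end

theorem pgl2_action_free_general
    (k K : Type*) [Field k] [CharP k 2] [Field K] [Algebra k K]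
    (hfg : (⊤ : IntermediateField k K).FG)
    (htr : ∃ x : K, Transcendental k x ∧
      Algebra.IsAlgebraic (IntermediateField.adjoin k {x}) K)
    (hdeg : Module.finrank (kSq k K) K = 2)
    (f : K) (hf : f ∉ kSq k K)
    (α β γ δ : K) (hα : α ∈ kFour k K) (hβ : β ∈ kFour k K)
    (hγ : γ ∈ kFour k K) (hδ : δ ∈ kFour k K)
    (hfix : (α * f + β) / (γ * f + δ) = f) :
    β = 0 ∧ γ = 0 ∧ α = δ := by
  have : CharP K 2 := charP_of_injective_algebraMap (algebraMap k K).injective 2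
  obtain ⟨hαδ, hγβ⟩ := eq_and_mul_sq_eq_of_div_eq_self (F := (kSq k K).toSubfield) hf
    (sq_mem_kSq f) (kFour_le_kSq hα) (kFour_le_kSq hβ) (kFour_le_kSq hγ) (kFour_le_kSq hδ) hfix
  have hγ0 : γ = 0 := by
    by_contra hγ0
    obtain ⟨t, ht, hKt⟩ := htr
    have := finiteDimensional_of_fg_top hfg (adjoin k {t})
    have hf4 : f ^ 2 ∈ kFour k K := eq_div_of_mul_eq hγ0 (by rw [mul_comm, hγβ]) ▸ div_mem hβ hγ
    have := four_le_finrank_kFour (k := k) ht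
    rw [← kSq_eq_kFour_of_sq_mem hdeg hf hf4, hdeg] at this
    omega
  exact ⟨by rw [← hγβ, hγ0, zero_mul], hγ0, hαδ⟩

/-- **Freeness of the `PGL₂(k^{1/4}·K)`-action** (cf. Definition 4.1 of
Kedlaya–Litt–Witaszek): let `k` be a field of characteristic `2` and `K` a finitely
generated field extension of transcendence degree `1` in which `k` is algebraically
closed, with `[K : k(K²)] = 2`.  If `f ∈ K \ k(K²)`, `α, β, γ, δ ∈ k(K⁴)` satisfy
`αδ + βγ ≠ 0` and `(αf + β)/(γf + δ) = f`, then `β = 0`, `γ = 0` and `α = δ`. -/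
theorem pgl2_action_free
    (k K : Type*) [Field k] [CharP k 2] [Field K] [Algebra k K]
    (hfg : (⊤ : IntermediateField k K).FG)
    (htr : ∃ x : K, Transcendental k x ∧
      Algebra.IsAlgebraic (IntermediateField.adjoin k {x}) K)
    (halg : ∀ x : K, IsAlgebraic k x → x ∈ (algebraMap k K).range)
    (hdeg : Module.finrank (kSq k K) K = 2)
    (f : K) (hf : f ∉ kSq k K)
    (α β γ δ : K) (hα : α ∈ kFour k K) (hβ : β ∈ kFour k K)
    (hγ : γ ∈ kFour k K) (hδ : δ ∈ kFour k K)
    (hdet : α * δ + β * γ ≠ 0)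
    (hfix : (α * f + β) / (γ * f + δ) = f) :
    β = 0 ∧ γ = 0 ∧ α = δ :=
  pgl2_action_free_general k K hfg htr hdeg f hf α β γ δ hα hβ hγ hδ hfix
end

section
/- With k, K, R, ι, M and the Sugiyama–Yasuda symbol SY as in the context: for all f, g ∈ R and all α, β, γ, δ ∈ k(K⁴) with αδ + βγ ≠ 0, setting g' := (αg + β)/(γg + δ), one has g' ∈ R and SY(f, g') = SY(f, g) in Ω_{K/k}. (The Sugiyama–Yasuda symbol is invariant under the action of Γ = PGL₂(k^{1/4}·K) on its second argument.) -/
/-!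
Work in the perfect closure `L`, inside the subfield `M = {x | x⁴ ∈ ι(k(K⁴))}`, which contains
`ι(K)` and the fourth roots `a, b, c, e` of `α, β, γ, δ`. The Möbius transformation
`G ↦ (a⁴G + b⁴)/(c⁴G + e⁴)` is a composite of translations `G ↦ G + b⁴`, scalings `G ↦ a⁴G` and
the inversion `G ↦ G⁻¹`. Each of these turns an expansion `f = ∑ cᵢ⁴ Gⁱ` over `M` into an explicit
expansion in the new variable and multiplies `((c₁c₃ + c₂²)/(c₁² + c₃²G))²` by `1`, `a⁻⁴`, `G²`
respectively, which is exactly the inverse of the factor by which `dG` changes.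

The expansion in `g' = (αg + β)/(γg + δ)` given by the second witness agrees with the transported
one because `1, g', g'², g'³` are linearly independent over `k(K⁴)`. Since `[K : k(K²)] = 2`,
this comes down to `k(K²) ≠ k(K⁴)`, which is a degree count over `k(t⁴)` for a transcendental
`t`: if `k(K²) = k(K⁴)`, then `K` is spanned by `2[K : k(t)]` elements over `k(t⁴)`, yet it
contains the `4[K : k(t)]` independent elements `tⁱ bⱼ`.
-/


open IntermediateField

/-- `SYWitness k K ι f g s` records that `s ∈ K` computes the Sugiyama–Yasuda symbol
`SY(f, g) = s • dg`: writing (inside a perfect closure `L` of `K`, via the embedding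
`ι : K → L`) `f = f₀⁴ + f₁⁴ g + f₂⁴ g² + f₃⁴ g³` with `f₀, f₁, f₂, f₃` in the subfield
`M = k^{1/4}·K = {x : L | x⁴ ∈ ι(k(K⁴))}`, one has
`s = ((f₁f₃ + f₂²)/(f₁² + f₃² g))²`.  (The decomposition, and hence `s`, exists and is
unique; here it is recorded as a predicate.) -/
def SYWitness (k K L : Type*) [Field k] [Field K] [Algebra k K] [Field L]
    (ι : K →+* L) (f g s : K) : Prop :=
  ∃ f0 f1 f2 f3 : L,
    f0 ^ 4 ∈ ι '' (kFour k K : Set K) ∧ f1 ^ 4 ∈ ι '' (kFour k K : Set K) ∧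
    f2 ^ 4 ∈ ι '' (kFour k K : Set K) ∧ f3 ^ 4 ∈ ι '' (kFour k K : Set K) ∧
    ι f = f0 ^ 4 + f1 ^ 4 * ι g + f2 ^ 4 * (ι g) ^ 2 + f3 ^ 4 * (ι g) ^ 3 ∧
    f1 ^ 2 + f3 ^ 2 * ι g ≠ 0 ∧
    ι s = ((f1 * f3 + f2 ^ 2) / (f1 ^ 2 + f3 ^ 2 * ι g)) ^ 2

theorem CharTwo.add_pow_four {R : Type*} [CommSemiring R] [CharP R 2] (x y : R) :
    (x + y) ^ 4 = x ^ 4 + y ^ 4 := by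
  rw [show 4 = 2 * 2 from rfl, pow_mul, pow_mul, pow_mul, CharTwo.add_sq, CharTwo.add_sq]

section FourthPowerExpansion

variable {L : Type*} [Field L] (S : Subfield L)

def IsFourthPowerExpansion (F G c₀ c₁ c₂ c₃ : L) : Prop :=
  c₀ ∈ S ∧ c₁ ∈ S ∧ c₂ ∈ S ∧ c₃ ∈ S ∧
    F = c₀ ^ 4 + c₁ ^ 4 * G + c₂ ^ 4 * G ^ 2 + c₃ ^ 4 * G ^ 3

def syValue (G c₁ c₂ c₃ : L) : L := ((c₁ * c₃ + c₂ ^ 2) / (c₁ ^ 2 + c₃ ^ 2 * G)) ^ 2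

/-- No nondegeneracy of the denominator of `syValue` is required: the transformation rules below
also hold when it vanishes, both sides then being `0`. -/
def HasSYValue (F G v : L) : Prop :=
  ∃ c₀ c₁ c₂ c₃, IsFourthPowerExpansion S F G c₀ c₁ c₂ c₃ ∧ syValue G c₁ c₂ c₃ = v

variable {S} {F G v : L}

theorem HasSYValue.add_pow_four [CharP L 2] (h : HasSYValue S F G v) {b : L} (hb : b ∈ S) :
    HasSYValue S F (G + b ^ 4) v := by
  obtain ⟨c₀, c₁, c₂, c₃, ⟨h₀, h₁, h₂, h₃, hF⟩, rfl⟩ := h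
  refine ⟨c₀ + c₁ * b + c₂ * b ^ 2 + c₃ * b ^ 3, c₁ + c₃ * b ^ 2, c₂ + c₃ * b, c₃,
    ⟨by aesop, by aesop, by aesop, h₃, by rw [hF]; grind⟩, ?_⟩
  unfold syValue
  congr 2 <;> grind

theorem HasSYValue.pow_four_mul (h : HasSYValue S F G v) {a : L} (ha : a ∈ S) (ha₀ : a ≠ 0) :
    HasSYValue S F (a ^ 4 * G) (v / a ^ 4) := by
  obtain ⟨c₀, c₁, c₂, c₃, ⟨h₀, h₁, h₂, h₃, hF⟩, rfl⟩ := h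
  refine ⟨c₀, c₁ / a, c₂ / a ^ 2, c₃ / a ^ 3, ⟨h₀, by aesop, by aesop, by aesop, ?_⟩, ?_⟩
  · rw [hF]; field_simp
  · unfold syValue
    by_cases hD : c₁ ^ 2 + c₃ ^ 2 * G = 0
    · have : (c₁ / a) ^ 2 + (c₃ / a ^ 3) ^ 2 * (a ^ 4 * G) = 0 := by
        field_simp; linear_combination hD
      simp [hD, this]
    · field_simp

theorem HasSYValue.inv (h : HasSYValue S F G v) (hG : G ∈ S) (hG₀ : G ≠ 0) :
    HasSYValue S F G⁻¹ (G ^ 2 * v) := by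
  obtain ⟨c₀, c₁, c₂, c₃, ⟨h₀, h₁, h₂, h₃, hF⟩, rfl⟩ := h
  refine ⟨c₀, c₃ * G, c₂ * G, c₁ * G, ⟨h₀, by aesop, by aesop, by aesop, ?_⟩, ?_⟩
  · rw [hF]; field_simp; ring
  · unfold syValue
    have hD : (c₃ * G) ^ 2 + (c₁ * G) ^ 2 * G⁻¹ = G * (c₁ ^ 2 + c₃ ^ 2 * G) := by
      field_simp; ring
    rw [hD]
    by_cases hD₀ : c₁ ^ 2 + c₃ ^ 2 * G = 0
    · simp [hD₀]
    · field_simp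

theorem HasSYValue.moebius [CharP L 2] (h : HasSYValue S F G v) (hG : G ∈ S) {a b c e : L}
    (ha : a ∈ S) (hb : b ∈ S) (hc : c ∈ S) (he : e ∈ S) (hdet : a * e + b * c ≠ 0)
    (hden : c ^ 4 * G + e ^ 4 ≠ 0) :
    HasSYValue S F ((a ^ 4 * G + b ^ 4) / (c ^ 4 * G + e ^ 4))
      (v * (c ^ 4 * G + e ^ 4) ^ 2 / (a * e + b * c) ^ 4) := by
  rcases eq_or_ne c 0 with rfl | hc₀
  · have he₀ : e ≠ 0 := by rintro rfl; simp at hdet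
    have ha₀ : a ≠ 0 := by rintro rfl; simp at hdet
    convert (h.pow_four_mul (div_mem ha he) (div_ne_zero ha₀ he₀)).add_pow_four (div_mem hb he)
      using 1 <;> simp only [zero_pow four_ne_zero, zero_mul, zero_add, mul_zero, add_zero] <;>
      field_simp
  · -- `(a⁴G + b⁴)/(c⁴G + e⁴) = a⁴/c⁴ + ((ae + bc)/c)⁴ / (c⁴G + e⁴)`
    have h₁ := ((h.pow_four_mul hc hc₀).add_pow_four he).inv
      (add_mem (mul_mem (pow_mem hc 4) hG) (pow_mem he 4)) hden
    have h₂ := (h₁.pow_four_mul (div_mem (add_mem (mul_mem ha he) (mul_mem hb hc)) hc)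
      (div_ne_zero hdet hc₀)).add_pow_four (div_mem ha hc)
    convert h₂ using 1
    · rw [div_pow, div_pow, CharTwo.add_pow_four, eq_comm, ← sub_eq_zero]
      field_simp
      grind
    · field_simp

theorem HasSYValue.unique [CharP L 2] {w : L} (hv : HasSYValue S F G v) (hw : HasSYValue S F G w)
    (hind : ∀ x₀ x₁ x₂ x₃, IsFourthPowerExpansion S 0 G x₀ x₁ x₂ x₃ →
      x₀ = 0 ∧ x₁ = 0 ∧ x₂ = 0 ∧ x₃ = 0) : v = w := by
  obtain ⟨c₀, c₁, c₂, c₃, ⟨hc₀, hc₁, hc₂, hc₃, hcF⟩, rfl⟩ := hv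
  obtain ⟨d₀, d₁, d₂, d₃, ⟨hd₀, hd₁, hd₂, hd₃, hdF⟩, rfl⟩ := hw
  obtain ⟨-, h₁, h₂, h₃⟩ := hind (c₀ + d₀) (c₁ + d₁) (c₂ + d₂) (c₃ + d₃)
    ⟨add_mem hc₀ hd₀, add_mem hc₁ hd₁, add_mem hc₂ hd₂, add_mem hc₃ hd₃, by
      simp only [CharTwo.add_pow_four]; grind⟩
  rw [CharTwo.add_eq_zero] at h₁ h₂ h₃
  rw [h₁, h₂, h₃]

end FourthPowerExpansion

theorem Derivation.map_moebius {R A M : Type*} [CommRing R] [Field A] [Algebra R A]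
    [AddCommGroup M] [Module A M] [Module R M] (D : Derivation R A M) {g α β γ δ : A}
    (hα : D α = 0) (hβ : D β = 0) (hγ : D γ = 0) (hδ : D δ = 0) :
    D ((α * g + β) / (γ * g + δ)) = ((α * δ - β * γ) / (γ * g + δ) ^ 2) • D g := by
  simp only [Derivation.leibniz_div, map_add, Derivation.leibniz, hα, hβ, hγ, hδ, smul_zero,
    add_zero, smul_smul, ← sub_smul]
  congr 1
  rw [div_eq_mul_inv, inv_pow]
  ring

section SquaresAndFourthPowers

variable {k K : Type*} [Field k] [Field K] [Algebra k K]

theorem pow_two_mem_kSq (y : K) : y ^ 2 ∈ kSq k K :=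
  subset_adjoin _ _ ⟨y, rfl⟩

theorem pow_four_mem_kFour (y : K) : y ^ 4 ∈ kFour k K :=
  subset_adjoin _ _ ⟨y, rfl⟩

theorem pow_two_mem_adjoin_image [CharP K 2] {S : Set K} {c : K} (hc : c ∈ adjoin k S) :
    c ^ 2 ∈ adjoin k ((· ^ 2) '' S) := by
  induction hc using adjoin_induction with
  | mem x hx => exact subset_adjoin _ _ ⟨x, hx, rfl⟩
  | algebraMap x => rw [← map_pow]; exact IntermediateField.algebraMap_mem _ _
  | add x y _ _ hx hy => rw [CharTwo.add_sq]; exact add_mem hx hy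
  | mul x y _ _ hx hy => rw [mul_pow]; exact mul_mem hx hy
  | inv x _ hx => rw [inv_pow]; exact inv_mem hx

theorem pow_two_mem_kFour_of_mem_kSq [CharP K 2] {u : K} (hu : u ∈ kSq k K) :
    u ^ 2 ∈ kFour k K := by
  refine adjoin_le_iff.mpr ?_ (pow_two_mem_adjoin_image hu)
  rintro _ ⟨_, ⟨y, rfl⟩, rfl⟩
  show (y ^ 2) ^ 2 ∈ kFour k K
  rw [← pow_mul]
  exact pow_four_mem_kFour y

theorem pow_four_mem_adjoin_simple [CharP K 2] {t c : K} (hc : c ∈ k⟮t⟯) : c ^ 4 ∈ k⟮t ^ 4⟯ := by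
  have := pow_two_mem_adjoin_image (pow_two_mem_adjoin_image hc)
  simpa only [Set.image_singleton, ← pow_mul] using this

theorem Derivation.map_eq_zero_of_mem_kSq [CharP K 2] {M : Type*} [AddCommGroup M] [Module K M]
    [Module k M] (D : Derivation k K M) {a : K} (ha : a ∈ kSq k K) : D a = 0 := by
  induction ha using adjoin_induction with
  | mem x hx =>
    obtain ⟨y, rfl⟩ := hx
    rw [sq, D.leibniz, ← add_smul, CharTwo.add_self_eq_zero, zero_smul]
  | algebraMap x => exact D.map_algebraMap x
  | add x y _ _ hx hy => rw [map_add, hx, hy, add_zero]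
  | mul x y _ _ hx hy => rw [D.leibniz, hx, hy, smul_zero, smul_zero, add_zero]
  | inv x _ hx => rw [D.leibniz_inv, hx, smul_zero]

theorem IntermediateField.eq_zero_of_add_mul_eq_zero {E : IntermediateField k K} {x u v : K}
    (hx : x ∉ E) (hu : u ∈ E) (hv : v ∈ E) (h : u + v * x = 0) : u = 0 ∧ v = 0 := by
  obtain rfl | hv₀ := eq_or_ne v 0
  · simpa using h
  · refine absurd ?_ hx
    rw [show x = -u / v by field_simp; linear_combination h]
    exact div_mem (neg_mem hu) hv

theorem IntermediateField.exists_add_mul_eq_of_finrank_eq_two {E : IntermediateField k K}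
    (hE : Module.finrank E K = 2) {x : K} (hx : x ∉ E) (z : K) :
    ∃ u ∈ E, ∃ v ∈ E, z = u + v * x := by
  have : FiniteDimensional E K := Module.finite_of_finrank_eq_succ hE
  have hli : LinearIndependent E ![(1 : K), x] := by
    rw [LinearIndependent.pair_iff]
    intro u v huv
    simp only [IntermediateField.smul_def, smul_eq_mul, mul_one] at huv
    simpa using eq_zero_of_add_mul_eq_zero hx u.2 v.2 huv
  have hz : z ∈ Submodule.span E {1, x} := by
    rw [← Matrix.range_cons_cons_empty, hli.span_eq_top_of_card_eq_finrank (by simp [hE])]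
    trivial
  obtain ⟨u, v, rfl⟩ := Submodule.mem_span_pair.mp hz
  exact ⟨u, u.2, v, v.2, by simp [IntermediateField.smul_def]⟩

theorem moebius_denom_ne_zero {g α β γ δ : K} (hg : g ∉ kSq k K) (hγ : γ ∈ kFour k K)
    (hδ : δ ∈ kFour k K) (hdet : α * δ + β * γ ≠ 0) : γ * g + δ ≠ 0 := by
  intro h
  obtain ⟨rfl, rfl⟩ := eq_zero_of_add_mul_eq_zero hg (kFour_le_kSq hδ) (kFour_le_kSq hγ)
    (by linear_combination h)
  simp at hdet

theorem moebius_notMem_kSq [CharP K 2] {g α β γ δ : K} (hg : g ∉ kSq k K)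
    (hα : α ∈ kFour k K) (hβ : β ∈ kFour k K) (hγ : γ ∈ kFour k K) (hδ : δ ∈ kFour k K)
    (hdet : α * δ + β * γ ≠ 0) : (α * g + β) / (γ * g + δ) ∉ kSq k K := by
  have hden := moebius_denom_ne_zero hg hγ hδ hdet
  intro hmem
  set g' := (α * g + β) / (γ * g + δ)
  have hg' : g' * (γ * g + δ) = α * g + β := div_mul_cancel₀ _ hden
  have hinv : γ * g' + α ≠ 0 := fun h => hdet (by grind)
  -- in characteristic 2 the inverse matrix is `(δ, β; γ, α)`
  have hg_eq : g = (δ * g' + β) / (γ * g' + α) := by field_simp; grind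
  exact hg (hg_eq ▸ div_mem (add_mem (mul_mem (kFour_le_kSq hδ) hmem) (kFour_le_kSq hβ))
    (add_mem (mul_mem (kFour_le_kSq hγ) hmem) (kFour_le_kSq hα)))

end SquaresAndFourthPowers

section DegreeCount

variable {k K : Type*} [Field k] [Field K] [Algebra k K]

open Polynomial in
theorem Transcendental.notMem_adjoin_sq {t : K} (ht : Transcendental k t) : t ∉ k⟮t ^ 2⟯ := by
  rw [mem_adjoin_simple_iff]
  rintro ⟨p, q, hpq⟩
  have hq : Polynomial.aeval (t ^ 2) q ≠ 0 := fun h => ht (by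
    rw [h, div_zero] at hpq; exact hpq ▸ isAlgebraic_zero)
  -- `t` is a root of `p(X²) - X q(X²)`, whose odd part is `X q(X²)`
  have hroot : Polynomial.aeval t (expand k 2 p - X * expand k 2 q) = 0 := by
    rw [eq_div_iff hq] at hpq
    rw [map_sub, map_mul, aeval_X, expand_aeval, expand_aeval]
    linear_combination -hpq
  have hzero : expand k 2 p - X * expand k 2 q = 0 := by
    by_contra hne
    exact ht ⟨_, hne, hroot⟩
  suffices q = 0 from hq (by rw [this, map_zero])
  ext n
  have := congrArg (coeff · (2 * n + 1)) hzero
  simp only [coeff_sub, coeff_zero, coeff_X_mul, coeff_expand two_pos] at this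
  simpa [show ¬ 2 ∣ 2 * n + 1 by omega, sub_eq_zero, eq_comm] using this

theorem Transcendental.linearIndependent_pow_four {t : K} (ht : Transcendental k t) :
    LinearIndependent k⟮t ^ 4⟯ fun i : Fin 4 => t ^ (i : ℕ) := by
  have hsq : ∀ {s : K}, Transcendental k s → ∀ {u v : K}, u ∈ k⟮s ^ 2⟯ → v ∈ k⟮s ^ 2⟯ →
      u + v * s = 0 → u = 0 ∧ v = 0 :=
    fun hs _ _ hu hv h => eq_zero_of_add_mul_eq_zero hs.notMem_adjoin_sq hu hv h
  have h42 : k⟮t ^ 4⟯ ≤ k⟮t ^ 2⟯ := by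
    rw [adjoin_simple_le_iff, show t ^ 4 = (t ^ 2) ^ 2 by ring]
    exact pow_mem (mem_adjoin_simple_self k _) 2
  have ht2 : t ^ 2 ∈ k⟮t ^ 2⟯ := mem_adjoin_simple_self k _
  rw [Fintype.linearIndependent_iff]
  intro c hc
  simp only [Fin.sum_univ_four, IntermediateField.smul_def, smul_eq_mul, Fin.val_zero, Fin.val_one,
    Fin.val_two, show ((3 : Fin 4) : ℕ) = 3 from rfl, pow_zero, pow_one, mul_one] at hc
  have hc' : ∀ i, (c i : K) ∈ k⟮(t ^ 2) ^ 2⟯ := fun i => by rw [← pow_mul]; exact (c i).2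
  obtain ⟨h02, h13⟩ := hsq ht (add_mem (h42 (c 0).2) (mul_mem (h42 (c 2).2) ht2))
    (add_mem (h42 (c 1).2) (mul_mem (h42 (c 3).2) ht2)) (by linear_combination hc)
  obtain ⟨h0, h2⟩ := hsq (ht.pow two_pos) (hc' 0) (hc' 2) h02
  obtain ⟨h1, h3⟩ := hsq (ht.pow two_pos) (hc' 1) (hc' 3) h13
  simp only [ZeroMemClass.coe_eq_zero] at h0 h1 h2 h3
  intro i
  fin_cases i <;> assumption

theorem IntermediateField.linearIndependent_mul_basis {F E : IntermediateField k K} (hFE : F ≤ E)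
    {ι ι' : Type*} {v : ι → K} (hvE : ∀ i, v i ∈ E) (hv : LinearIndependent F v)
    (b : Module.Basis ι' E K) : LinearIndependent F fun p : ι × ι' => v p.1 * b p.2 := by
  let _ : Algebra F E := (inclusion hFE).toAlgebra
  have : IsScalarTower F E K := IsScalarTower.of_algebraMap_eq fun _ => rfl
  have hv' : LinearIndependent F fun i => (⟨v i, hvE i⟩ : E) :=
    .of_comp (IsScalarTower.toAlgHom F E K).toLinearMap hv
  convert linearIndependent_smul hv' b.linearIndependent using 1
  ext p
  rfl

theorem kFour_subset_span_pow_four [CharP K 2] {F E : IntermediateField k K}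
    (hF : ∀ c ∈ E, c ^ 4 ∈ F) {ι : Type*} [Fintype ι] (b : Module.Basis ι E K) :
    (kFour k K : Set K) ⊆ Submodule.span F (Set.range fun i => b i ^ 4) := by
  set V := Submodule.span F (Set.range fun i => b i ^ 4)
  have hpow : ∀ y : K, y ^ 4 ∈ V := by
    intro y
    rw [← b.sum_repr y, show 4 = 2 * 2 from rfl, pow_mul, CharTwo.sum_sq, CharTwo.sum_sq]
    refine Submodule.sum_mem _ fun i _ => ?_
    have hi : ((b.repr y i • b i) ^ 2) ^ 2 = (⟨_, hF _ (b.repr y i).2⟩ : F) • b i ^ 4 := by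
      simp only [IntermediateField.smul_def, smul_eq_mul, ← pow_mul, mul_pow]
    rw [hi]
    exact V.smul_mem _ (Submodule.subset_span ⟨i, rfl⟩)
  have hmul : ∀ u ∈ V, ∀ w ∈ V, u * w ∈ V := by
    have : V * V ≤ V := by
      rw [Submodule.span_mul_span, Submodule.span_le]
      rintro _ ⟨_, ⟨i, rfl⟩, _, ⟨j, rfl⟩, rfl⟩
      simpa only [SetLike.mem_coe, ← mul_pow] using hpow (b i * b j)
    exact fun u hu w hw => this (Submodule.mul_mem_mul hu hw)
  intro z hz
  induction hz using adjoin_induction with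
  | mem x hx => obtain ⟨y, rfl⟩ := hx; exact hpow y
  | algebraMap c =>
    rw [Algebra.algebraMap_eq_smul_one, ← one_pow 4]
    exact Submodule.smul_of_tower_mem V c (hpow 1)
  | add x y _ _ hx hy => exact add_mem hx hy
  | mul x y _ _ hx hy => exact hmul x hx y hy
  | inv x _ hx =>
    rcases eq_or_ne x 0 with rfl | hx₀
    · simp
    rw [show x⁻¹ = x * x * x * x⁻¹ ^ 4 by field_simp]
    exact hmul _ (hmul _ (hmul _ hx _ hx) _ hx) _ (hpow _)

theorem IntermediateField.finrank_le_of_finrank_eq_two {E F : IntermediateField k K}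
    (hE : Module.finrank E K = 2) {V : Submodule F K} (hV : V.FG) (hEV : (E : Set K) ⊆ V) :
    Module.Finite F K ∧ Module.finrank F K ≤ 2 * Module.finrank F V := by
  obtain ⟨x, hx⟩ : ∃ x : K, x ∉ E := by
    by_contra! h
    rw [(eq_top_iff.mpr fun z _ => h z : E = ⊤), IntermediateField.finrank_top] at hE
    omega
  have htop : V ⊔ V.map (LinearMap.mulRight F x) = ⊤ := by
    refine eq_top_iff.mpr fun z _ => ?_
    obtain ⟨u, hu, v, hv, rfl⟩ := exists_add_mul_eq_of_finrank_eq_two hE hx z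
    exact Submodule.add_mem_sup (hEV hu) (Submodule.mem_map_of_mem (hEV hv))
  have hfin : Module.Finite F K := by
    rw [Module.finite_def, ← htop]
    exact hV.sup (hV.map _)
  have : Module.Finite F V := Module.Finite.iff_fg.mpr hV
  refine ⟨hfin, ?_⟩
  calc Module.finrank F K = Module.finrank F (⊤ : Submodule F K) := (finrank_top F K).symm
    _ = Module.finrank F ↥(V ⊔ V.map (LinearMap.mulRight F x)) := by rw [htop]
    _ ≤ Module.finrank F V + Module.finrank F (V.map (LinearMap.mulRight F x)) :=
      Submodule.finrank_add_le_finrank_add_finrank _ _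
    _ ≤ 2 * Module.finrank F V := by
      rw [two_mul]
      exact add_le_add_right (Submodule.finrank_map_le _ _) _

theorem kSq_ne_kFour [CharP K 2] (hfg : (⊤ : IntermediateField k K).FG)
    (htr : ∃ x : K, Transcendental k x ∧ Algebra.IsAlgebraic k⟮x⟯ K)
    (hdeg : Module.finrank (kSq k K) K = 2) : kSq k K ≠ kFour k K := by
  intro hEq
  obtain ⟨t, ht, halg⟩ := htr
  have : Algebra.EssFiniteType k K := fg_top_iff.mp hfg
  have : Algebra.EssFiniteType k⟮t⟯ K := .of_comp k k⟮t⟯ K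
  have : Module.Finite k⟮t⟯ K := Algebra.finite_of_essFiniteType_of_isAlgebraic
  set m := Module.finrank k⟮t⟯ K
  set b := Module.finBasis k⟮t⟯ K
  set V := Submodule.span k⟮t ^ 4⟯ (Set.range fun j => b j ^ 4)
  obtain ⟨_, hup⟩ := finrank_le_of_finrank_eq_two hdeg (V := V)
    (Submodule.fg_span (Set.finite_range _))
    fun z hz => kFour_subset_span_pow_four (fun c => pow_four_mem_adjoin_simple) b (hEq ▸ hz)
  have hVm : Module.finrank k⟮t ^ 4⟯ V ≤ m := (finrank_range_le_card _).trans (by simp [m])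
  have hlow : 4 * m ≤ Module.finrank k⟮t ^ 4⟯ K := by
    simpa using (linearIndependent_mul_basis
      (adjoin_simple_le_iff.mpr (pow_mem (mem_adjoin_simple_self k t) 4))
      (fun i => pow_mem (mem_adjoin_simple_self k t) _) ht.linearIndependent_pow_four
      b).fintype_card_le_finrank
  have hm : 0 < m := Module.finrank_pos
  omega

theorem pow_two_notMem_kFour [CharP K 2] (hfg : (⊤ : IntermediateField k K).FG)
    (htr : ∃ x : K, Transcendental k x ∧ Algebra.IsAlgebraic k⟮x⟯ K)
    (hdeg : Module.finrank (kSq k K) K = 2) {g : K} (hg : g ∉ kSq k K) : g ^ 2 ∉ kFour k K := by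
  intro hg2
  refine kSq_ne_kFour hfg htr hdeg (le_antisymm ?_ kFour_le_kSq)
  rw [kSq, adjoin_le_iff]
  rintro _ ⟨z, rfl⟩
  obtain ⟨u, hu, v, hv, rfl⟩ := exists_add_mul_eq_of_finrank_eq_two hdeg hg z
  rw [CharTwo.add_sq, mul_pow]
  exact add_mem (pow_two_mem_kFour_of_mem_kSq hu) (mul_mem (pow_two_mem_kFour_of_mem_kSq hv) hg2)

theorem eq_zero_of_sum_mul_pow_eq_zero [CharP K 2] (hfg : (⊤ : IntermediateField k K).FG)
    (htr : ∃ x : K, Transcendental k x ∧ Algebra.IsAlgebraic k⟮x⟯ K)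
    (hdeg : Module.finrank (kSq k K) K = 2) {g : K} (hg : g ∉ kSq k K) {v₀ v₁ v₂ v₃ : K}
    (h₀ : v₀ ∈ kFour k K) (h₁ : v₁ ∈ kFour k K) (h₂ : v₂ ∈ kFour k K) (h₃ : v₃ ∈ kFour k K)
    (h : v₀ + v₁ * g + v₂ * g ^ 2 + v₃ * g ^ 3 = 0) : v₀ = 0 ∧ v₁ = 0 ∧ v₂ = 0 ∧ v₃ = 0 := by
  have hg2 := pow_two_notMem_kFour hfg htr hdeg hg
  obtain ⟨h02, h13⟩ := eq_zero_of_add_mul_eq_zero hg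
    (add_mem (kFour_le_kSq h₀) (mul_mem (kFour_le_kSq h₂) (pow_two_mem_kSq g)))
    (add_mem (kFour_le_kSq h₁) (mul_mem (kFour_le_kSq h₃) (pow_two_mem_kSq g)))
    (by linear_combination h)
  obtain ⟨rfl, rfl⟩ := eq_zero_of_add_mul_eq_zero hg2 h₀ h₂ h02
  obtain ⟨rfl, rfl⟩ := eq_zero_of_add_mul_eq_zero hg2 h₁ h₃ h13
  exact ⟨rfl, rfl, rfl, rfl⟩

end DegreeCount

section PerfectClosure

variable {k K L : Type*} [Field k] [Field K] [Algebra k K] [Field L] [CharP L 2] (ι : K →+* L)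

variable (k K) in
/-- The subfield `M = k^{1/4}·K` of `L`. -/
def fourthRootField : Subfield L :=
  ((kFour k K).toSubfield.map ι).comap (iterateFrobenius L 2 2)

theorem mem_fourthRootField {x : L} :
    x ∈ fourthRootField k K ι ↔ x ^ 4 ∈ ι '' (kFour k K : Set K) := Iff.rfl

theorem map_mem_fourthRootField (x : K) : ι x ∈ fourthRootField k K ι :=
  ⟨x ^ 4, pow_four_mem_kFour x, map_pow ι x 4⟩

variable {ι}

theorem SYWitness.hasSYValue {f g s : K} (h : SYWitness k K L ι f g s) :
    HasSYValue (fourthRootField k K ι) (ι f) (ι g) (ι s) := by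
  obtain ⟨c₀, c₁, c₂, c₃, h₀, h₁, h₂, h₃, hf, -, hs⟩ := h
  exact ⟨c₀, c₁, c₂, c₃, ⟨h₀, h₁, h₂, h₃, hf⟩, hs.symm⟩

theorem SYWitness.hasSYValue_moebius (hLperf : ∀ x : L, ∃ y : L, y ^ 2 = x)
    {f g s α β γ δ : K} (hs : SYWitness k K L ι f g s) (hα : α ∈ kFour k K)
    (hβ : β ∈ kFour k K) (hγ : γ ∈ kFour k K) (hδ : δ ∈ kFour k K)
    (hdet : α * δ + β * γ ≠ 0) (hden : γ * g + δ ≠ 0) :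
    HasSYValue (fourthRootField k K ι) (ι f) (ι ((α * g + β) / (γ * g + δ)))
      (ι (s * (γ * g + δ) ^ 2 / (α * δ + β * γ))) := by
  have hroot : ∀ {y : K}, y ∈ kFour k K → ∃ x ∈ fourthRootField k K ι, x ^ 4 = ι y := by
    intro y hy
    obtain ⟨x₁, hx₁⟩ := hLperf (ι y)
    obtain ⟨x, rfl⟩ := hLperf x₁
    have hx : x ^ 4 = ι y := by rw [← hx₁]; ring
    exact ⟨x, (mem_fourthRootField ι).mpr ⟨y, hy, hx.symm⟩, hx⟩
  obtain ⟨a, ha, ha₄⟩ := hroot hα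
  obtain ⟨b, hb, hb₄⟩ := hroot hβ
  obtain ⟨c, hc, hc₄⟩ := hroot hγ
  obtain ⟨e, he, he₄⟩ := hroot hδ
  have hdet₄ : (a * e + b * c) ^ 4 = ι (α * δ + β * γ) := by
    rw [CharTwo.add_pow_four, mul_pow, mul_pow, ha₄, hb₄, hc₄, he₄, map_add, map_mul, map_mul]
  have hden₄ : c ^ 4 * ι g + e ^ 4 = ι (γ * g + δ) := by
    rw [hc₄, he₄, map_add, map_mul]
  convert hs.hasSYValue.moebius (map_mem_fourthRootField ι g) ha hb hc he
    (ne_zero_pow four_ne_zero (hdet₄ ▸ (map_ne_zero ι).mpr hdet))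
    (hden₄ ▸ (map_ne_zero ι).mpr hden) using 1
  · rw [ha₄, hb₄, hden₄, map_div₀, map_add, map_add, map_mul, map_mul]
  · rw [map_div₀, map_mul, map_pow, hdet₄, hden₄]

theorem eq_zero_of_isFourthPowerExpansion_zero [CharP K 2]
    (hfg : (⊤ : IntermediateField k K).FG)
    (htr : ∃ x : K, Transcendental k x ∧ Algebra.IsAlgebraic k⟮x⟯ K)
    (hdeg : Module.finrank (kSq k K) K = 2) {g : K} (hg : g ∉ kSq k K) {x₀ x₁ x₂ x₃ : L}
    (h : IsFourthPowerExpansion (fourthRootField k K ι) 0 (ι g) x₀ x₁ x₂ x₃) :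
    x₀ = 0 ∧ x₁ = 0 ∧ x₂ = 0 ∧ x₃ = 0 := by
  obtain ⟨hx₀, hx₁, hx₂, hx₃, h⟩ := h
  obtain ⟨v₀, h₀, e₀⟩ := (mem_fourthRootField ι).mp hx₀
  obtain ⟨v₁, h₁, e₁⟩ := (mem_fourthRootField ι).mp hx₁
  obtain ⟨v₂, h₂, e₂⟩ := (mem_fourthRootField ι).mp hx₂
  obtain ⟨v₃, h₃, e₃⟩ := (mem_fourthRootField ι).mp hx₃
  have hv : v₀ + v₁ * g + v₂ * g ^ 2 + v₃ * g ^ 3 = 0 := ι.injective <| by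
    simp only [map_add, map_mul, map_pow, map_zero]
    rw [e₀, e₁, e₂, e₃, ← h]
  obtain ⟨rfl, rfl, rfl, rfl⟩ :=
    eq_zero_of_sum_mul_pow_eq_zero hfg htr hdeg hg h₀ h₁ h₂ h₃ hv
  simp only [map_zero, eq_comm (a := (0 : L)), pow_eq_zero_iff four_ne_zero] at e₀ e₁ e₂ e₃
  exact ⟨e₀, e₁, e₂, e₃⟩

end PerfectClosure

theorem SY_symbol_invariant_snd_general
    (k K : Type*) [Field k] [CharP k 2] [Field K] [Algebra k K]
    (hfg : (⊤ : IntermediateField k K).FG)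
    (htr : ∃ x : K, Transcendental k x ∧
      Algebra.IsAlgebraic (IntermediateField.adjoin k {x}) K)
    (hdeg : Module.finrank (kSq k K) K = 2)
    (L : Type*) [Field L] (ι : K →+* L)
    (hLperf : ∀ x : L, ∃ y : L, y ^ 2 = x)
    (f g : K) (hg : g ∉ kSq k K)
    (α β γ δ : K) (hα : α ∈ kFour k K) (hβ : β ∈ kFour k K)
    (hγ : γ ∈ kFour k K) (hδ : δ ∈ kFour k K)
    (hdet : α * δ + β * γ ≠ 0) :
    (α * g + β) / (γ * g + δ) ∉ kSq k K ∧
    ∀ s s' : K, SYWitness k K L ι f g s →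
      SYWitness k K L ι f ((α * g + β) / (γ * g + δ)) s' →
      s • (KaehlerDifferential.D k K g : Ω[K⁄k]) =
        s' • KaehlerDifferential.D k K ((α * g + β) / (γ * g + δ)) := by
  have : CharP K 2 := charP_of_injective_algebraMap (algebraMap k K).injective 2
  have : CharP L 2 := charP_of_injective_ringHom ι.injective 2
  have hden := moebius_denom_ne_zero hg hγ hδ hdet
  have hg' := moebius_notMem_kSq hg hα hβ hγ hδ hdet
  refine ⟨hg', fun s s' hs hs' => ?_⟩
  have hss' : s * (γ * g + δ) ^ 2 / (α * δ + β * γ) = s' :=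
    ι.injective <| (hs.hasSYValue_moebius hLperf hα hβ hγ hδ hdet hden).unique hs'.hasSYValue
      fun _ _ _ _ => eq_zero_of_isFourthPowerExpansion_zero hfg htr hdeg hg'
  have hD : ∀ {x}, x ∈ kFour k K → KaehlerDifferential.D k K x = 0 :=
    fun hx => (KaehlerDifferential.D k K).map_eq_zero_of_mem_kSq (kFour_le_kSq hx)
  rw [(KaehlerDifferential.D k K).map_moebius (hD hα) (hD hβ) (hD hγ) (hD hδ), smul_smul, ← hss',
    CharTwo.sub_eq_add, div_mul_div_cancel₀ hdet, mul_div_cancel_right₀ _ (pow_ne_zero 2 hden)]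

/-- **`Γ`-invariance of the Sugiyama–Yasuda symbol in the second argument**
(Lemma 4.4 of Kedlaya–Litt–Witaszek): for `f, g ∈ R = K \ k(K²)` and
`α, β, γ, δ ∈ k(K⁴)` with `αδ + βγ ≠ 0`, the element `g' = (αg + β)/(γg + δ)` again
lies in `R` and `SY(f, g') = SY(f, g)` in `Ω[K⁄k]`. -/
theorem SY_symbol_invariant_snd
    (k K : Type*) [Field k] [CharP k 2] [Field K] [Algebra k K]
    (hfg : (⊤ : IntermediateField k K).FG)
    (htr : ∃ x : K, Transcendental k x ∧
      Algebra.IsAlgebraic (IntermediateField.adjoin k {x}) K)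
    (halg : ∀ x : K, IsAlgebraic k x → x ∈ (algebraMap k K).range)
    (hdeg : Module.finrank (kSq k K) K = 2)
    (L : Type*) [Field L] (ι : K →+* L)
    (hLperf : ∀ x : L, ∃ y : L, y ^ 2 = x)
    (hLinsep : ∀ x : L, ∃ n : ℕ, x ^ 2 ^ n ∈ Set.range ι)
    (f g : K) (hf : f ∉ kSq k K) (hg : g ∉ kSq k K)
    (α β γ δ : K) (hα : α ∈ kFour k K) (hβ : β ∈ kFour k K)
    (hγ : γ ∈ kFour k K) (hδ : δ ∈ kFour k K)
    (hdet : α * δ + β * γ ≠ 0) :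
    (α * g + β) / (γ * g + δ) ∉ kSq k K ∧
    ∀ s s' : K, SYWitness k K L ι f g s →
      SYWitness k K L ι f ((α * g + β) / (γ * g + δ)) s' →
      s • (KaehlerDifferential.D k K g : Ω[K⁄k]) =
        s' • KaehlerDifferential.D k K ((α * g + β) / (γ * g + δ)) :=
  SY_symbol_invariant_snd_general k K hfg htr hdeg L ι hLperf f g hg α β γ δ hα hβ hγ hδ hdet
end

section
/- Let k be an algebraically closed field of characteristic 2 and K a finitely generated field extension of k of transcendence degree 1 (so [K : k(K²)] = 2). Then for every g ∈ R := K \ k(K²) and every a ∈ K, there exists f ∈ R with SY(f, g) = da in Ω_{K/k}. (By Tsen's theorem, the quadratic equation defining the Sugiyama–Yasuda symbol has a solution, so every exact differential is realized as a symbol against g.) -/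
open IntermediateField

/-!
Since `k` is perfect, `k(K²)` consists of the squares of `K`, so `a = s² + c² g` and
`da = c² dg`. It therefore suffices to solve `f₁f₃ + f₂² = c (f₁² + f₃² g)` with `(f₁, f₃) ≠ 0`:
then `f = f₁⁴ g + f₂⁴ g² + f₃⁴ g³` has symbol `c² dg`, and `f` is not a square because `g` is not.
This is the isotropy of a ternary quadratic form over `K`, i.e. Tsen's theorem. With `K` finite over
`k(t)`, let `W r` be the `k`-space of elements whose coordinates are polynomials in `t` of degree
`≤ r`; after clearing denominators the form sends `(W r)³` to `W (3r)`, of smaller dimension, and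
over the algebraically closed `k` such a quadratic map has a nonzero zero. That last fact is proved
by a Hilbert-function count: if forms `F₁, …, F_M` in `N > M` variables had only the trivial zero,
the Nullstellensatz would put all monomials of degree `≤ d s + O(1)` (about `s^N` of them) into the
span of the `F^γ X^δ` with `γ ≤ s` (about `s^M` of them).
-/

theorem Nat.exists_mul_le_mul_and_pow_mul_lt_pow {M N d : ℕ} (hMN : M < N) (hd : 0 < d) (C : ℕ) :
    ∃ s m, N * m ≤ d * s ∧ (s + 1) ^ M * C < (m + 1) ^ N := by
  set u := N ^ M * C
  refine ⟨N * u, d * u, by rw [Nat.mul_left_comm], ?_⟩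
  calc (N * u + 1) ^ M * C ≤ (N * (d * u + 1)) ^ M * C := by
        have : N * u ≤ N * (d * u) := Nat.mul_le_mul_left N (Nat.le_mul_of_pos_left u hd)
        gcongr
        rw [mul_add_one]
        omega
    _ = (d * u + 1) ^ M * u := by rw [mul_pow]; ring
    _ < (d * u + 1) ^ M * (d * u + 1) := by gcongr; nlinarith
    _ = (d * u + 1) ^ (M + 1) := (pow_succ _ _).symm
    _ ≤ (d * u + 1) ^ N := Nat.pow_le_pow_right (Nat.succ_pos _) hMN

namespace MvPolynomial

section Homogeneous

variable {σ R : Type*} [CommSemiring R]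

theorem homogeneousComponent_add_mul_of_isHomogeneous {f : MvPolynomial σ R} {m : ℕ}
    (hf : f.IsHomogeneous m) (c : MvPolynomial σ R) (e : ℕ) :
    homogeneousComponent (e + m) (c * f) = homogeneousComponent e c * f := by
  have hterm : ∀ i, homogeneousComponent (e + m) (homogeneousComponent i c * f) =
      if e = i then homogeneousComponent i c * f else 0 := fun i => by
    rw [homogeneousComponent_of_mem ((mem_homogeneousSubmodule _ _).mpr
      ((homogeneousComponent_isHomogeneous i c).mul hf))]
    simp only [add_left_inj]
  conv_lhs => rw [← sum_homogeneousComponent c, Finset.sum_mul, map_sum]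
  rw [Finset.sum_congr rfl fun i _ => hterm i, Finset.sum_ite_eq]
  split_ifs with he
  · rfl
  · rw [homogeneousComponent_eq_zero _ _ (by simpa using he), zero_mul]

theorem exists_isHomogeneous_sum_mul_of_mem_span {ι : Type*} [Fintype ι]
    {F : ι → MvPolynomial σ R} {d n : ℕ} (hF : ∀ i, (F i).IsHomogeneous d) (hdn : d ≤ n)
    {p : MvPolynomial σ R} (hp : p.IsHomogeneous n) (hpF : p ∈ Ideal.span (Set.range F)) :
    ∃ h : ι → MvPolynomial σ R, (∀ i, (h i).IsHomogeneous (n - d)) ∧ p = ∑ i, h i * F i := by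
  obtain ⟨c, rfl⟩ := Ideal.mem_span_range_iff_exists_fun.mp hpF
  refine ⟨fun i => homogeneousComponent (n - d) (c i),
    fun i => homogeneousComponent_isHomogeneous _ _, ?_⟩
  rw [← homogeneousComponent_eq_self hp, map_sum]
  refine Finset.sum_congr rfl fun i _ => ?_
  rw [← homogeneousComponent_add_mul_of_isHomogeneous (hF i), Nat.sub_add_cancel hdn]

end Homogeneous

section CommonZero

variable {σ ι k : Type*} [Field k]

theorem exists_X_pow_mem_span_of_forall_eval_eq_zero [IsAlgClosed k] [Fintype σ]
    {F : ι → MvPolynomial σ k} (hF : ∀ x : σ → k, (∀ i, eval x (F i) = 0) → x = 0) (m : ℕ) :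
    ∃ E, m ≤ E ∧ ∀ j, X j ^ E ∈ Ideal.span (Set.range F) := by
  have hrad : ∀ j, X j ∈ (Ideal.span (Set.range F)).radical := fun j => by
    rw [← vanishingIdeal_zeroLocus_eq_radical (K := k)]
    intro x hx
    have hx0 : x = 0 := hF x fun i => hx _ (Ideal.subset_span ⟨i, rfl⟩)
    simp [hx0]
  choose e he using hrad
  refine ⟨m + ∑ j, e j, le_self_add, fun j => Ideal.pow_mem_of_pow_mem _ (he j) ?_⟩
  exact (Finset.single_le_sum (fun _ _ => Nat.zero_le _) (Finset.mem_univ j)).trans le_add_self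

variable [Fintype ι] [Fintype σ]

variable (k) in
noncomputable def boundedPowerSpan (F : ι → MvPolynomial σ k) (s D : ℕ) :
    Submodule k (MvPolynomial σ k) :=
  Submodule.span k (Set.range fun p : (ι → Fin (s + 1)) × (σ → Fin (D + 1)) =>
    (∏ i, F i ^ (p.1 i : ℕ)) * ∏ j, X j ^ (p.2 j : ℕ))

variable {F : ι → MvPolynomial σ k}

theorem finrank_boundedPowerSpan_le [DecidableEq ι] [DecidableEq σ] (s D : ℕ) :
    Module.finrank k (boundedPowerSpan k F s D) ≤
      (s + 1) ^ Fintype.card ι * (D + 1) ^ Fintype.card σ := by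
  refine (finrank_range_le_card _).trans ?_
  simp [Fintype.card_prod]

instance (s D : ℕ) : FiniteDimensional k (boundedPowerSpan k F s D) :=
  FiniteDimensional.span_of_finite k (Set.finite_range _)

theorem monomial_mem_boundedPowerSpan {D : ℕ} {m : σ →₀ ℕ} (hm : ∀ j, m j ≤ D) (s : ℕ) :
    monomial m (1 : k) ∈ boundedPowerSpan k F s D := by
  refine Submodule.subset_span ⟨(0, fun j => ⟨m j, Nat.lt_succ_of_le (hm j)⟩), ?_⟩
  simp [monomial_eq, Finsupp.prod_fintype]

theorem mul_mem_boundedPowerSpan_succ [DecidableEq ι] {s D : ℕ} {p : MvPolynomial σ k}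
    (hp : p ∈ boundedPowerSpan k F s D) (i : ι) : F i * p ∈ boundedPowerSpan k F (s + 1) D := by
  induction hp using Submodule.span_induction with
  | mem x hx =>
    obtain ⟨⟨γ, δ⟩, rfl⟩ := hx
    refine Submodule.subset_span ⟨(fun i' => ⟨γ i' + (Pi.single i 1 : ι → ℕ) i', ?_⟩, δ), ?_⟩
    · have := (γ i').isLt
      rw [Pi.single_apply]
      split_ifs <;> omega
    · simp only [pow_add, Finset.prod_mul_distrib, Pi.single_apply, pow_ite, pow_one, pow_zero,
        Finset.prod_ite_eq', Finset.mem_univ, if_true]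
      ring
  | zero => simp
  | add x y _ _ hx hy => rw [mul_add]; exact add_mem hx hy
  | smul a x _ hx => rw [mul_smul_comm]; exact Submodule.smul_mem _ _ hx

theorem restrictTotalDegree_le_boundedPowerSpan [DecidableEq ι] {d E : ℕ}
    (hF : ∀ i, (F i).IsHomogeneous d) (hdE : d ≤ E)
    (hE : ∀ j, X j ^ E ∈ Ideal.span (Set.range F)) (s : ℕ) :
    restrictTotalDegree σ k (d * s + Fintype.card σ * E) ≤
      boundedPowerSpan k F s (Fintype.card σ * E) := by
  set D := Fintype.card σ * E
  induction s with
  | zero =>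
    rw [mul_zero, zero_add, restrictTotalDegree, restrictSupport_eq_span, Submodule.span_le]
    rintro _ ⟨m, hm, rfl⟩
    exact monomial_mem_boundedPowerSpan (fun j => (Finsupp.le_degree j m).trans hm) 0
  | succ s ih =>
    rw [restrictTotalDegree, restrictSupport_eq_span, Submodule.span_le]
    rintro _ ⟨m, hm, rfl⟩
    by_cases hD : ∀ j, m j ≤ D
    · exact monomial_mem_boundedPowerSpan hD _
    -- Otherwise `X j ^ E ∣ X ^ m`, and `X j ^ E = ∑ hᵢ Fᵢ` trades degree `d` for a factor `Fᵢ`.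
    obtain ⟨j, hj⟩ := not_forall.mp hD
    rw [not_le] at hj
    have hEj : E ≤ m j := (Nat.le_mul_of_pos_left E (Fintype.card_pos_iff.mpr ⟨j⟩)).trans hj.le
    obtain ⟨m', rfl⟩ := exists_add_of_le (Finsupp.single_le_iff.mpr hEj)
    obtain ⟨h, hh, hXj⟩ :=
      exists_isHomogeneous_sum_mul_of_mem_span hF hdE (isHomogeneous_X_pow j E) (hE j)
    change monomial (Finsupp.single j E + m') (1 : k) ∈ boundedPowerSpan k F (s + 1) D
    rw [← mul_one (1 : k), ← monomial_mul, ← X_pow_eq_monomial, hXj, Finset.sum_mul]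
    refine Submodule.sum_mem _ fun i _ => ?_
    rw [mul_comm (h i), mul_assoc]
    refine mul_mem_boundedPowerSpan_succ (ih ?_) i
    rw [mem_restrictTotalDegree]
    refine ((hh i).mul (isHomogeneous_monomial _ rfl)).totalDegree_le.trans ?_
    have hdeg : (Finsupp.single j E + m').degree ≤ d * (s + 1) + D := hm
    rw [map_add, Finsupp.degree_single, mul_add_one] at hdeg
    omega

theorem pow_card_le_finrank_of_restrictTotalDegree_le {S : Submodule k (MvPolynomial σ k)}
    [FiniteDimensional k S] {m : ℕ} (hS : restrictTotalDegree σ k (Fintype.card σ * m) ≤ S) :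
    (m + 1) ^ Fintype.card σ ≤ Module.finrank k S := by
  classical
  let e : (σ → Fin (m + 1)) → σ →₀ ℕ := fun v => Finsupp.equivFunOnFinite.symm fun j => v j
  have he : Function.Injective e := fun v w h =>
    _root_.funext fun j => Fin.ext (congrFun (Finsupp.equivFunOnFinite.symm.injective h) j)
  have hmem : ∀ v, monomial (e v) (1 : k) ∈ S := fun v => hS <| by
    rw [mem_restrictTotalDegree, totalDegree_monomial _ one_ne_zero]
    change (e v).degree ≤ _
    rw [Finsupp.degree_eq_sum, Fintype.card_eq_sum_ones, Finset.sum_mul, one_mul]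
    exact Finset.sum_le_sum fun j _ => Nat.lt_succ_iff.mp (v j).isLt
  have hli : LinearIndependent k fun v => (⟨monomial (e v) 1, hmem v⟩ : S) := by
    refine LinearIndependent.of_comp S.subtype ?_
    simpa [Function.comp_def] using (basisMonomials σ k).linearIndependent.comp e he
  simpa [Fintype.card_fun] using hli.fintype_card_le_finrank

theorem exists_ne_zero_forall_eval_eq_zero_of_isHomogeneous [IsAlgClosed k]
    (hcard : Fintype.card ι < Fintype.card σ) {d : ℕ} (hd : 0 < d)
    (hF : ∀ i, (F i).IsHomogeneous d) :
    ∃ x : σ → k, x ≠ 0 ∧ ∀ i, eval x (F i) = 0 := by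
  classical
  by_contra hcon
  obtain ⟨E, hdE, hE⟩ := exists_X_pow_mem_span_of_forall_eval_eq_zero
    (fun x hx => by_contra fun hx0 => hcon ⟨x, hx0, hx⟩) d
  set D := Fintype.card σ * E
  obtain ⟨s, m, hms, hlt⟩ :=
    Nat.exists_mul_le_mul_and_pow_mul_lt_pow hcard hd ((D + 1) ^ Fintype.card σ)
  have hle : restrictTotalDegree σ k (Fintype.card σ * m) ≤ boundedPowerSpan k F s D :=
    (restrictSupport_mono k fun _ hn => le_trans hn (Nat.le_add_right_of_le hms)).trans
      (restrictTotalDegree_le_boundedPowerSpan hF hdE hE s)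
  exact (hlt.trans_le (pow_card_le_finrank_of_restrictTotalDegree_le hle)).not_ge
    (finrank_boundedPowerSpan_le s D)

end CommonZero

end MvPolynomial

open Module MvPolynomial in
theorem LinearMap.exists_ne_zero_apply_self_eq_zero {k V W : Type*} [Field k] [IsAlgClosed k]
    [AddCommGroup V] [Module k V] [AddCommGroup W] [Module k W]
    [FiniteDimensional k V] [FiniteDimensional k W] (hdim : finrank k W < finrank k V)
    (B : V →ₗ[k] V →ₗ[k] W) : ∃ v, v ≠ 0 ∧ B v v = 0 := by
  let bV := Module.finBasis k V
  let bW := Module.finBasis k W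
  let F : Fin (finrank k W) → MvPolynomial (Fin (finrank k V)) k := fun i =>
    ∑ a, ∑ b, C (bW.repr (B (bV a) (bV b)) i) * (X a * X b)
  have hF : ∀ i, (F i).IsHomogeneous 2 := fun i =>
    IsHomogeneous.sum _ _ _ fun a _ => IsHomogeneous.sum _ _ _ fun b _ =>
      (isHomogeneous_C _ _).mul ((isHomogeneous_X k a).mul (isHomogeneous_X k b))
  obtain ⟨x, hx0, hx⟩ := exists_ne_zero_forall_eval_eq_zero_of_isHomogeneous
    (by simpa using hdim) two_pos hF
  refine ⟨bV.equivFun.symm x, (LinearEquiv.map_ne_zero_iff _).mpr hx0, bW.ext_elem fun i => ?_⟩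
  have h := hx i
  simp only [F, map_sum, eval_mul, eval_C, eval_X] at h
  simp only [bV.equivFun_symm_apply, map_sum, map_smul, LinearMap.sum_apply, LinearMap.smul_apply,
    Finsupp.coe_finsetSum, Finset.sum_apply, Finsupp.coe_smul, Pi.smul_apply, smul_eq_mul,
    Finset.mul_sum, map_zero, Finsupp.coe_zero, Pi.zero_apply]
  rw [Finset.sum_comm, ← h]
  exact Finset.sum_congr rfl fun a _ => Finset.sum_congr rfl fun b _ => by ring

section DegreeFiltration

open Polynomial

variable {k K ι : Type*} [Field k] [Field K] [Algebra k K]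

variable (k) in
def degreeFiltration (t : K) (b : ι → K) (d : ℕ) : Submodule k K :=
  Submodule.span k (Set.range fun p : Fin (d + 1) × ι => t ^ (p.1 : ℕ) * b p.2)

variable {t : K} {b : ι → K}

instance [Fintype ι] (d : ℕ) : FiniteDimensional k (degreeFiltration k t b d) :=
  FiniteDimensional.span_of_finite k (Set.finite_range _)

theorem degreeFiltration_mono : Monotone (degreeFiltration k t b) := fun d d' hdd' =>
  Submodule.span_mono <| by
    rintro _ ⟨⟨i, j⟩, rfl⟩
    exact ⟨⟨⟨i, by omega⟩, j⟩, rfl⟩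

theorem pow_mul_mem_degreeFiltration {d : ℕ} {x : K} (hx : x ∈ degreeFiltration k t b d) (i : ℕ) :
    t ^ i * x ∈ degreeFiltration k t b (d + i) := by
  induction hx using Submodule.span_induction with
  | mem y hy =>
    obtain ⟨⟨i', j⟩, rfl⟩ := hy
    refine Submodule.subset_span ⟨⟨⟨i' + i, by omega⟩, j⟩, ?_⟩
    simp only [pow_add]
    ring
  | zero => simp
  | add x y _ _ hx hy => rw [mul_add]; exact add_mem hx hy
  | smul a x _ hx => rw [mul_smul_comm]; exact Submodule.smul_mem _ _ hx

theorem aeval_mul_mem_degreeFiltration {d : ℕ} {x : K} (hx : x ∈ degreeFiltration k t b d)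
    (q : k[X]) : aeval t q * x ∈ degreeFiltration k t b (d + q.natDegree) := by
  rw [aeval_eq_sum_range, Finset.sum_mul]
  refine Submodule.sum_mem _ fun i hi => ?_
  rw [smul_mul_assoc]
  refine Submodule.smul_mem _ _ (degreeFiltration_mono ?_ (pow_mul_mem_degreeFiltration hx i))
  simp only [Finset.mem_range] at hi
  omega

theorem mul_mul_mem_degreeFiltration {c x y : K} {r₀ r₁ r₂ : ℕ}
    (hc : ∀ j j', c * (b j * b j') ∈ degreeFiltration k t b r₀)
    (hx : x ∈ degreeFiltration k t b r₁) (hy : y ∈ degreeFiltration k t b r₂) :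
    c * (x * y) ∈ degreeFiltration k t b (r₀ + r₁ + r₂) := by
  have hxy := Submodule.mul_mem_mul hx hy
  rw [degreeFiltration, degreeFiltration, Submodule.span_mul_span] at hxy
  generalize x * y = z at hxy ⊢
  induction hxy using Submodule.span_induction with
  | mem z hz =>
    obtain ⟨_, ⟨⟨i, j⟩, rfl⟩, _, ⟨⟨i', j'⟩, rfl⟩, rfl⟩ := hz
    have := pow_mul_mem_degreeFiltration (hc j j') (i + i')
    rw [show t ^ (i + i' : ℕ) * (c * (b j * b j')) = c * (t ^ (i : ℕ) * b j * (t ^ (i' : ℕ) * b j'))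
      by ring] at this
    exact degreeFiltration_mono (by omega) this
  | zero => simp
  | add x y _ _ hx hy => rw [mul_add]; exact add_mem hx hy
  | smul a x _ hx => rw [mul_smul_comm]; exact Submodule.smul_mem _ _ hx

theorem finrank_degreeFiltration [Fintype ι] (ht : Transcendental k t)
    (b : Module.Basis ι k⟮t⟯ K) (d : ℕ) :
    Module.finrank k (degreeFiltration k t b d) = (d + 1) * Fintype.card ι := by
  have hpow : LinearIndependent k fun i : Fin (d + 1) => AdjoinSimple.gen k t ^ (i : ℕ) := by
    have hinj : Function.Injective (aeval (R := k) (AdjoinSimple.gen k t)) := by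
      rwa [← transcendental_iff_injective,
        ← transcendental_algebraMap_iff (algebraMap k⟮t⟯ K).injective]
    have := ((basisMonomials k).linearIndependent.map' (aeval (AdjoinSimple.gen k t)).toLinearMap
      (LinearMap.ker_eq_bot.mpr hinj)).comp _ (Fin.val_injective (n := d + 1))
    simpa [Function.comp_def] using this
  have hli := linearIndependent_smul hpow b.linearIndependent
  rw [degreeFiltration, finrank_span_eq_card (by simpa [Algebra.smul_def] using hli)]
  simp

theorem exists_aeval_mul_eq_aeval_of_mem_adjoin_simple {α : Type*} [Fintype α] {y : α → K}
    (hy : ∀ a, y a ∈ k⟮t⟯) :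
    ∃ q : k[X], aeval t q ≠ 0 ∧ ∀ a, ∃ p : k[X], aeval t q * y a = aeval t p := by
  classical
  have hfrac : ∀ a, ∃ q : k[X], aeval t q ≠ 0 ∧ ∃ p : k[X], aeval t q * y a = aeval t p := by
    intro a
    obtain ⟨p, q, hpq⟩ := (mem_adjoin_simple_iff k (y a)).mp (hy a)
    by_cases hq : aeval t q = 0
    · exact ⟨1, by simp, 0, by simp [hpq, hq]⟩
    · exact ⟨q, hq, p, by rw [hpq, mul_div_cancel₀ _ hq]⟩
  choose q hq p hp using hfrac
  refine ⟨∏ a, q a, by simpa [Finset.prod_ne_zero_iff] using hq, fun a => ?_⟩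
  refine ⟨(∏ a' ∈ Finset.univ.erase a, q a') * p a, ?_⟩
  rw [← Finset.prod_erase_mul _ _ (Finset.mem_univ a), map_mul, map_mul, mul_assoc, hp]

theorem exists_aeval_mul_mem_degreeFiltration [Fintype ι] (b : Module.Basis ι k⟮t⟯ K)
    {α : Type*} [Fintype α] (z : α → K) :
    ∃ q : k[X], aeval t q ≠ 0 ∧ ∃ r, ∀ a, aeval t q * z a ∈ degreeFiltration k t b r := by
  obtain ⟨q, hq, hp⟩ := exists_aeval_mul_eq_aeval_of_mem_adjoin_simple
    (y := fun p : α × ι => (b.repr (z p.1) p.2 : K)) fun p => (b.repr (z p.1) p.2).2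
  choose p hp using hp
  refine ⟨q, hq, Finset.univ.sup fun a => (p a).natDegree, fun a => ?_⟩
  rw [← b.sum_repr (z a), Finset.mul_sum]
  refine Submodule.sum_mem _ fun j _ => ?_
  rw [Algebra.smul_def, IntermediateField.algebraMap_apply, ← mul_assoc, hp (a, j)]
  have hb : (b j : K) ∈ degreeFiltration k t b 0 := Submodule.subset_span ⟨(0, j), by simp⟩
  have hle : (p (a, j)).natDegree ≤ Finset.univ.sup fun a => (p a).natDegree :=
    Finset.le_sup (f := fun a => (p a).natDegree) (Finset.mem_univ (a, j))
  exact degreeFiltration_mono (by simpa using hle) (aeval_mul_mem_degreeFiltration hb _)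

open Matrix in
theorem exists_ne_zero_dotProduct_mulVec_eq_zero [IsAlgClosed k] (ht : Transcendental k t)
    [FiniteDimensional k⟮t⟯ K] [Fintype ι] (hι : 3 ≤ Fintype.card ι) (c : Matrix ι ι K) :
    ∃ x : ι → K, x ≠ 0 ∧ x ⬝ᵥ c *ᵥ x = 0 := by
  classical
  let b := Module.finBasis k⟮t⟯ K
  obtain ⟨q, hq, r, hr⟩ := exists_aeval_mul_mem_degreeFiltration b
    fun p : ι × ι × _ × _ => c p.1 p.2.1 * (b p.2.2.1 * b p.2.2.2)
  let W := degreeFiltration k t b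
  let incl : (ι → W r) →ₗ[k] ι → K := (W r).subtype.compLeft ι
  let B : (ι → W r) →ₗ[k] (ι → W r) →ₗ[k] K := LinearMap.mk₂ k
    (fun x y => aeval t q * (incl x ⬝ᵥ c *ᵥ incl y))
    (fun x x' y => by rw [map_add, add_dotProduct, mul_add])
    (fun a x y => by rw [map_smul, smul_dotProduct, mul_smul_comm])
    (fun x y y' => by rw [map_add, mulVec_add, dotProduct_add, mul_add])
    (fun a x y => by rw [map_smul, mulVec_smul, dotProduct_smul, mul_smul_comm])
  have hB : ∀ x y, B x y ∈ W (r + r + r) := fun x y => by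
    simp only [B, LinearMap.mk₂_apply, dotProduct, Matrix.mulVec, Finset.mul_sum]
    refine Submodule.sum_mem _ fun i _ => Submodule.sum_mem _ fun i' _ => ?_
    convert mul_mul_mem_degreeFiltration (c := aeval t q * c i i')
      (fun j j' => by simpa [mul_assoc] using hr (i, i', j, j')) (x i).2 (y i').2 using 1
    simp only [incl, LinearMap.compLeft_apply, Function.comp_apply, Submodule.coe_subtype]
    ring
  have hdim : Module.finrank k (W (r + r + r)) < Module.finrank k (ι → W r) := by
    have hn : 0 < Fintype.card (Fin (Module.finrank k⟮t⟯ K)) := by simpa using Module.finrank_pos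
    simp only [W, Module.finrank_pi_fintype, finrank_degreeFiltration ht, Finset.sum_const,
      Finset.card_univ, smul_eq_mul]
    nlinarith [Nat.mul_le_mul_right ((r + 1) * Fintype.card (Fin (Module.finrank k⟮t⟯ K))) hι]
  have hB' : ∀ x y, B x y ∈ LinearMap.range (W (r + r + r)).subtype := by simpa using hB
  obtain ⟨v, hv0, hv⟩ :=
    (B.codRestrict₂ _ (W _).injective_subtype hB').exists_ne_zero_apply_self_eq_zero hdim
  refine ⟨incl v, fun h => hv0 (funext fun i => Subtype.ext (congrFun h i)), ?_⟩
  have hBv : B v v = 0 := by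
    rw [← B.codRestrict₂_apply _ (W _).injective_subtype hB', hv, map_zero]
  simp only [B, LinearMap.mk₂_apply] at hBv
  exact (mul_eq_zero.mp hBv).resolve_left hq

end DegreeFiltration

section CharTwo

variable {K : Type*} [Field K] [CharP K 2]

theorem sq_add_sq_mul_ne_zero {g u v : K} (hg : ¬IsSquare g) (huv : u ≠ 0 ∨ v ≠ 0) :
    u ^ 2 + v ^ 2 * g ≠ 0 := by
  intro h
  rcases eq_or_ne v 0 with rfl | hv
  · exact huv.resolve_right (not_not.mpr rfl) (pow_eq_zero_iff two_ne_zero |>.mp (by simpa using h))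
  · refine hg ⟨u / v, ?_⟩
    field_simp
    linear_combination h - u ^ 2 * CharTwo.two_eq_zero (R := K)

theorem not_isSquare_add_mul_add_mul_sq_add_mul_cube {g : K} (hg : ¬IsSquare g) {f₀ f₁ f₂ f₃ : K}
    (hden : f₁ ^ 2 + f₃ ^ 2 * g ≠ 0) :
    ¬IsSquare (f₀ ^ 4 + f₁ ^ 4 * g + f₂ ^ 4 * g ^ 2 + f₃ ^ 4 * g ^ 3) := by
  -- In characteristic 2 the argument equals `(f₀² + f₂² g)² + g (f₁² + f₃² g)²`.
  rintro ⟨y, hy⟩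
  refine hg ⟨(y + f₀ ^ 2 + f₂ ^ 2 * g) / (f₁ ^ 2 + f₃ ^ 2 * g), ?_⟩
  rw [div_mul_div_comm, eq_div_iff (mul_ne_zero hden hden)]
  linear_combination hy + (g ^ 2 * f₁ ^ 2 * f₃ ^ 2 - y * (f₀ ^ 2 + f₂ ^ 2 * g) - f₀ ^ 4 -
    f₀ ^ 2 * f₂ ^ 2 * g - f₂ ^ 4 * g ^ 2) * CharTwo.two_eq_zero (R := K)

theorem Derivation.map_sq_add_sq_mul {R M : Type*} [CommSemiring R] [Algebra R K]
    [AddCommMonoid M] [Module K M] [Module R M] (D : Derivation R K M) (s c g : K) :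
    D (s ^ 2 + c ^ 2 * g) = c ^ 2 • D g := by
  have hsq : ∀ x : K, D (x ^ 2) = 0 := fun x => by
    rw [pow_two, Derivation.leibniz, ← add_smul, CharTwo.add_self_eq_zero, zero_smul]
  rw [map_add, hsq, Derivation.leibniz, hsq, smul_zero, zero_add, add_zero]

end CharTwo

open Matrix in
theorem exists_mul_add_sq_eq_mul_sq_add_sq_mul {k K : Type*} [Field k] [Field K] [Algebra k K]
    [IsAlgClosed k] {t : K} (ht : Transcendental k t) [FiniteDimensional k⟮t⟯ K] (a g : K) :
    ∃ f₁ f₂ f₃ : K, (f₁ ≠ 0 ∨ f₃ ≠ 0) ∧ f₁ * f₃ + f₂ ^ 2 = a * (f₁ ^ 2 + f₃ ^ 2 * g) := by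
  -- the quadratic form `x₀ x₂ + x₁² - a (x₀² + g x₂²)`
  obtain ⟨x, hx0, hx⟩ := exists_ne_zero_dotProduct_mulVec_eq_zero ht (by simp)
    !![-a, 0, 1; 0, 1, 0; 0, 0, -a * g]
  simp only [dotProduct, mulVec, neg_mul, of_apply, cons_val', cons_val_fin_one,
    Fin.sum_univ_three, cons_val_zero, cons_val_one, cons_val, zero_mul, add_zero, one_mul,
    zero_add, mul_neg] at hx
  refine ⟨x 0, x 1, x 2, ?_, by linear_combination hx⟩
  by_contra! h
  have h1 : x 1 = 0 := by simpa [h.1, h.2] using hx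
  exact hx0 (funext fun i => by fin_cases i <;> simp [h.1, h1, h.2])

theorem mem_kSq_iff_isSquare {k K : Type*} [Field k] [Field K] [Algebra k K] [CharP K 2]
    (hk : ∀ c : k, IsSquare c) {x : K} : x ∈ kSq k K ↔ IsSquare x := by
  refine ⟨fun hx => ?_, fun ⟨y, hy⟩ => subset_adjoin _ _ ⟨y, by rw [hy, sq]⟩⟩
  let S := (frobenius K 2).fieldRange.toIntermediateField (K := k) fun c => by
    obtain ⟨z, rfl⟩ := hk c
    exact ⟨algebraMap k K z, by simp [frobenius_def, sq]⟩
  have hxS : x ∈ S := adjoin_le_iff.mpr (fun z hz => by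
    obtain ⟨y, rfl⟩ := hz
    exact ⟨y, frobenius_def 2 y⟩) hx
  obtain ⟨y, hy⟩ := hxS
  exact ⟨y, by rw [← hy, frobenius_def, sq]⟩

theorem exists_eq_add_mul_of_finrank_eq_two {k K : Type*} [Field k] [Field K] [Algebra k K]
    {L : IntermediateField k K} (hL : Module.finrank L K = 2) {g : K} (hg : g ∉ L) (a : K) :
    ∃ x ∈ L, ∃ y ∈ L, a = x + y * g := by
  have : FiniteDimensional L K := .of_finrank_pos (by omega)
  have hli : LinearIndependent L ![1, g] := by
    refine LinearIndependent.pair_iff.mpr fun x y hxy => ?_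
    have hxy' : (x : K) + y * g = 0 := by simpa [Algebra.smul_def] using hxy
    by_cases hy : y = 0
    · subst hy
      simpa using hxy'
    · have hy' : (y : K) ≠ 0 := by exact_mod_cast hy
      refine absurd ?_ hg
      rw [show g = -(x / y : K) by field_simp; linear_combination hxy']
      exact neg_mem (div_mem x.2 y.2)
  have hspan := hli.span_eq_top_of_card_eq_finrank' (by simp [hL])
  have ha : a ∈ Submodule.span L (Set.range ![1, g]) := hspan ▸ Submodule.mem_top
  rw [Matrix.range_cons, Matrix.range_cons, Matrix.range_empty, Set.union_empty,
      Set.singleton_union, Submodule.mem_span_pair] at ha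
  obtain ⟨x, y, hxy⟩ := ha
  refine ⟨x, x.2, y, y.2, ?_⟩
  rw [← hxy, Algebra.smul_def, Algebra.smul_def, mul_one]
  rfl

theorem IntermediateField.finiteDimensional_of_isAlgebraic_of_fg_top {k K : Type*} [Field k]
    [Field K] [Algebra k K] (hfg : (⊤ : IntermediateField k K).FG) (L : IntermediateField k K)
    [Algebra.IsAlgebraic L K] : FiniteDimensional L K :=
  have := fg_top_iff.mp hfg
  have := Algebra.EssFiniteType.of_comp k L K
  Algebra.finite_of_essFiniteType_of_isAlgebraic

/-- **Surjectivity of the Sugiyama–Yasuda symbol via Tsen's theorem** (Remark 4.9 of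
Kedlaya–Litt–Witaszek): let `k` be an algebraically closed field of characteristic `2`
and `K` a finitely generated field extension of transcendence degree `1` (so that
`[K : k(K²)] = 2`).  For every `g ∈ R = K \ k(K²)` and every `a ∈ K`, there is
`f ∈ R` with `SY(f, g) = da` in `Ω[K⁄k]`; here `f = f₀⁴ + f₁⁴ g + f₂⁴ g² + f₃⁴ g³`
with `fᵢ ∈ K` (since `k` is perfect, `k(K⁴) = K⁴`) and
`SY(f, g) = ((f₁f₃ + f₂²)/(f₁² + f₃² g))² • dg`. -/
theorem SY_symbol_surjective_of_algClosed
    (k K : Type*) [Field k] [IsAlgClosed k] [CharP k 2] [Field K] [Algebra k K]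
    (hfg : (⊤ : IntermediateField k K).FG)
    (htr : ∃ x : K, Transcendental k x ∧
      Algebra.IsAlgebraic (IntermediateField.adjoin k {x}) K)
    (hdeg : Module.finrank (kSq k K) K = 2)
    (g : K) (hg : g ∉ kSq k K) (a : K) :
    ∃ f : K, f ∉ kSq k K ∧ ∃ f0 f1 f2 f3 : K,
      f = f0 ^ 4 + f1 ^ 4 * g + f2 ^ 4 * g ^ 2 + f3 ^ 4 * g ^ 3 ∧
      f1 ^ 2 + f3 ^ 2 * g ≠ 0 ∧
      ((f1 * f3 + f2 ^ 2) / (f1 ^ 2 + f3 ^ 2 * g)) ^ 2 •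
          (KaehlerDifferential.D k K g : Ω[K⁄k]) =
        KaehlerDifferential.D k K a := by
  have : CharP K 2 := charP_of_injective_algebraMap (algebraMap k K).injective 2
  have hsq (x : K) : x ∈ kSq k K ↔ IsSquare x :=
    mem_kSq_iff_isSquare IsAlgClosed.exists_eq_mul_self
  obtain ⟨t, ht, _⟩ := htr
  have := finiteDimensional_of_isAlgebraic_of_fg_top hfg k⟮t⟯
  obtain ⟨_, hs, _, hc, rfl⟩ := exists_eq_add_mul_of_finrank_eq_two hdeg hg a
  obtain ⟨s, rfl⟩ := (isSquare_iff_exists_sq _).mp ((hsq _).mp hs)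
  obtain ⟨c, rfl⟩ := (isSquare_iff_exists_sq _).mp ((hsq _).mp hc)
  have hg' : ¬IsSquare g := (hsq g).not.mp hg
  obtain ⟨f₁, f₂, f₃, hf, hconic⟩ := exists_mul_add_sq_eq_mul_sq_add_sq_mul ht c g
  have hden := sq_add_sq_mul_ne_zero hg' hf
  refine ⟨_, (hsq _).not.mpr (not_isSquare_add_mul_add_mul_sq_add_mul_cube hg' hden),
    0, f₁, f₂, f₃, rfl, hden, ?_⟩
  rw [hconic, mul_div_cancel_right₀ _ hden, Derivation.map_sq_add_sq_mul]
end
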